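/- arXiv:2108.00282 — 2 statements merged into one kernel-verified Lean document; each statement's English description precedes it below -/
import Mathlib

section
/- Let 𝐃 be an invertible nk×nk matrix, 𝓜 = I_k ⊗ M and 𝓜_p = I_k ⊗ M_p with M, M_p invertible, 𝐁 = I_k ⊗ B, and suppose the commutator relation (𝓜⁻¹𝐃)𝓜⁻¹𝐁ᵀ = 𝓜⁻¹𝐁ᵀ(𝓜_p⁻¹ D_p) holds exactly for some invertible D_p. Then 𝐁 𝐃⁻¹ 𝐁ᵀ = (I_k ⊗ (B M⁻¹ Bᵀ)) · D_p⁻¹ · 𝓜_p. -/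
open Matrix Kronecker

/-- If the discrete commutator relation
`(𝓜⁻¹𝐃)𝓜⁻¹Bkᵀ = 𝓜⁻¹Bkᵀ(𝓜_p⁻¹ D_p)` holds exactly, with `𝓜 = I_k ⊗ M`,
`𝓜_p = I_k ⊗ M_p`, `Bk = I_k ⊗ B` and `𝐃`, `D_p`, `M`, `M_p` invertible, then
`Bk 𝐃⁻¹ Bkᵀ = (I_k ⊗ (B M⁻¹ Bᵀ)) D_p⁻¹ 𝓜_p`. -/
theorem stmt6 {n m k : ℕ}
    (M : Matrix (Fin n) (Fin n) ℝ) (Mp : Matrix (Fin m) (Fin m) ℝ)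
    (B : Matrix (Fin m) (Fin n) ℝ)
    (D : Matrix (Fin k × Fin n) (Fin k × Fin n) ℝ)
    (Dp : Matrix (Fin k × Fin m) (Fin k × Fin m) ℝ)
    (hM : IsUnit M.det) (hMp : IsUnit Mp.det)
    (hD : IsUnit D.det) (hDp : IsUnit Dp.det)
    (𝓜 : Matrix (Fin k × Fin n) (Fin k × Fin n) ℝ)
    (h𝓜 : 𝓜 = (1 : Matrix (Fin k) (Fin k) ℝ) ⊗ₖ M)
    (𝓜p : Matrix (Fin k × Fin m) (Fin k × Fin m) ℝ)
    (h𝓜p : 𝓜p = (1 : Matrix (Fin k) (Fin k) ℝ) ⊗ₖ Mp)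
    (Bk : Matrix (Fin k × Fin m) (Fin k × Fin n) ℝ)
    (hBk : Bk = (1 : Matrix (Fin k) (Fin k) ℝ) ⊗ₖ B)
    (hcomm : (𝓜⁻¹ * D) * (𝓜⁻¹ * Bkᵀ) = (𝓜⁻¹ * Bkᵀ) * (𝓜p⁻¹ * Dp)) :
    Bk * D⁻¹ * Bkᵀ =
      ((1 : Matrix (Fin k) (Fin k) ℝ) ⊗ₖ (B * M⁻¹ * Bᵀ)) * Dp⁻¹ * 𝓜p := by
  have h𝓜u : IsUnit 𝓜.det := by
    rw [h𝓜, det_kronecker, det_one, one_pow, one_mul]; exact hM.pow _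
  have h𝓜pu : IsUnit 𝓜p.det := by
    rw [h𝓜p, det_kronecker, det_one, one_pow, one_mul]; exact hMp.pow _
  -- cancel 𝓜⁻¹ on the left of hcomm
  have h1 : D * (𝓜⁻¹ * Bkᵀ) = Bkᵀ * (𝓜p⁻¹ * Dp) := by
    have := congrArg (fun X => 𝓜 * X) hcomm
    simpa [Matrix.mul_assoc, Matrix.mul_nonsing_inv_cancel_left _ _ h𝓜u] using this
  -- multiply left by D⁻¹, right by Dp⁻¹ * 𝓜p
  have h2 : D⁻¹ * Bkᵀ = 𝓜⁻¹ * Bkᵀ * Dp⁻¹ * 𝓜p := by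
    have := congrArg (fun X => D⁻¹ * X * (Dp⁻¹ * 𝓜p)) h1
    simp only [Matrix.mul_assoc, Matrix.nonsing_inv_mul_cancel_left _ _ hD,
      Matrix.mul_nonsing_inv_cancel_left _ _ hDp,
      Matrix.nonsing_inv_mul _ h𝓜pu, Matrix.mul_one] at this
    simpa [Matrix.mul_assoc] using this.symm
  have hkron : Bk * 𝓜⁻¹ * Bkᵀ =
      (1 : Matrix (Fin k) (Fin k) ℝ) ⊗ₖ (B * M⁻¹ * Bᵀ) := by
    rw [hBk, h𝓜, inv_kronecker, inv_one,
        ← kroneckerMap_transpose, transpose_one, ← mul_kronecker_mul,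
        ← mul_kronecker_mul, Matrix.mul_one, Matrix.mul_one]
  calc Bk * D⁻¹ * Bkᵀ = Bk * (D⁻¹ * Bkᵀ) := by rw [Matrix.mul_assoc]
    _ = Bk * (𝓜⁻¹ * Bkᵀ * Dp⁻¹ * 𝓜p) := by rw [h2]
    _ = (Bk * 𝓜⁻¹ * Bkᵀ) * Dp⁻¹ * 𝓜p := by simp [Matrix.mul_assoc]
    _ = _ := by rw [hkron]
end

section
/- Let M be symmetric positive definite, L real square, β > 0, and suppose L is symmetric positive semidefinite. Then every generalized eigenvalue λ with ((1/β)M + L M⁻¹ L) x = λ (L + (1/√β)M) M⁻¹ (L + (1/√β)M) x for nonzero x satisfies λ = (a² + b²)/(a + b)² ∈ [1/2, 1] for some a, b ≥ 0 not both zero, where a, b arise from a simultaneous diagonalization; in particular 1/2 ≤ λ ≤ 1. -/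
open Matrix

/-! Write `c = 1/√β`. With `A = c²M + LM⁻¹L` the equation reads `Ax = λ(A + 2cL)x`, because
`(L ± cM) M⁻¹ (L ± cM) = A ± 2cL`. Pairing with `x`, `xᵀAx = λ(xᵀAx + 2c xᵀLx)`, where
`xᵀAx > 0` and `0 ≤ 2c xᵀLx ≤ xᵀAx`, the upper bound because the difference is
`xᵀ(L - cM)M⁻¹(L - cM)x ≥ 0`; hence `λ ∈ [1/2, 1]`. Conversely every `λ ∈ [1/2, 1]` equals
`(a² + b²)/(a + b)²` for `a, b = (1 ± √(2λ - 1))/2`. -/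

theorem mem_Icc_of_eq_mul_add {p s μ : ℝ} (hp : 0 < p) (hs : 0 ≤ s) (hsp : s ≤ p)
    (h : p = μ * (p + s)) : μ ∈ Set.Icc (1 / 2) 1 := by
  constructor <;> nlinarith

theorem exists_eq_sq_add_sq_div_sq_add {μ : ℝ} (hμ : μ ∈ Set.Icc (1 / 2) 1) :
    ∃ a b : ℝ, 0 ≤ a ∧ 0 ≤ b ∧ (a ≠ 0 ∨ b ≠ 0) ∧ μ = (a ^ 2 + b ^ 2) / (a + b) ^ 2 := by
  obtain ⟨hμ₁, hμ₂⟩ := hμ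
  set t := Real.sqrt (2 * μ - 1)
  have ht : t ^ 2 = 2 * μ - 1 := Real.sq_sqrt (by linarith)
  have ht₁ : t ≤ 1 := Real.sqrt_le_one.mpr (by linarith)
  refine ⟨(1 + t) / 2, (1 - t) / 2, by positivity, by linarith, .inl (by positivity), ?_⟩
  field_simp
  linarith

variable {ι : Type*} [Fintype ι] [DecidableEq ι]

namespace Matrix

variable {R : Type*}

theorem add_smul_mul_inv_mul_add_smul [CommRing R] {M : Matrix ι ι R} (hM : IsUnit M)
    (L : Matrix ι ι R) (c : R) :
    (L + c • M) * M⁻¹ * (L + c • M) = L * M⁻¹ * L + (2 * c) • L + c ^ 2 • M := by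
  have hdet : IsUnit M.det := (isUnit_iff_isUnit_det M).mp hM
  simp only [add_mul, mul_add, Matrix.smul_mul, Matrix.mul_smul, Matrix.mul_assoc,
    mul_nonsing_inv M hdet, nonsing_inv_mul M hdet, Matrix.one_mul, Matrix.mul_one, smul_smul]
  module

theorem PosSemidef.mul_inv_mul_self [CommRing R] [PartialOrder R] [StarRing R]
    {M U : Matrix ι ι R} (hM : M.PosSemidef) (hU : U.IsHermitian) :
    (U * M⁻¹ * U).PosSemidef := by
  simpa only [hU.eq] using hM.inv.conjTranspose_mul_mul_same U

end Matrix

theorem generalizedEigenvalue_mem_Icc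
    {M L : Matrix ι ι ℝ} (hM : M.PosDef) (hL : L.PosSemidef) {c : ℝ} (hc : 0 < c) {μ : ℝ}
    {x : ι → ℝ} (hx : x ≠ 0)
    (h : (c ^ 2 • M + L * M⁻¹ * L) *ᵥ x = μ • (((L + c • M) * M⁻¹ * (L + c • M)) *ᵥ x)) :
    μ ∈ Set.Icc (1 / 2) 1 := by
  have hm : 0 < x ⬝ᵥ (M *ᵥ x) := by simpa using hM.dotProduct_mulVec_pos hx
  have hk : 0 ≤ x ⬝ᵥ ((L * M⁻¹ * L) *ᵥ x) := by
    simpa using (hM.posSemidef.mul_inv_mul_self hL.isHermitian).dotProduct_mulVec_nonneg x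
  have hr : 0 ≤ x ⬝ᵥ (L *ᵥ x) := by simpa using hL.dotProduct_mulVec_nonneg x
  have hd : 0 ≤ x ⬝ᵥ (((L + (-c) • M) * M⁻¹ * (L + (-c) • M)) *ᵥ x) := by
    have hT : (L + (-c) • M).IsHermitian := hL.isHermitian.add (hM.isHermitian.smul (.all _))
    simpa using (hM.posSemidef.mul_inv_mul_self hT).dotProduct_mulVec_nonneg x
  have hpair := congrArg (x ⬝ᵥ ·) h
  rw [add_smul_mul_inv_mul_add_smul hM.isUnit] at hpair hd
  simp only [add_mulVec, smul_mulVec, dotProduct_add, dotProduct_smul, smul_eq_mul] at hpair hd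
  set m := x ⬝ᵥ (M *ᵥ x)
  set k := x ⬝ᵥ ((L * M⁻¹ * L) *ᵥ x)
  set r := x ⬝ᵥ (L *ᵥ x)
  exact mem_Icc_of_eq_mul_add (p := c ^ 2 * m + k) (s := 2 * c * r) (by positivity)
    (by positivity) (by linarith) (by linarith)

/-- For `M` s.p.d. and `L` symmetric positive semidefinite, every generalized
eigenvalue `λ` of `((1/β)M + L M⁻¹ L) x = λ (L + (1/√β)M) M⁻¹ (L + (1/√β)M) x`
has the form `(a² + b²)/(a + b)²` with `a, b ≥ 0` not both zero; in particular
`1/2 ≤ λ ≤ 1`. -/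
theorem stmt11 {n : ℕ}
    (M L : Matrix (Fin n) (Fin n) ℝ) (hM : M.PosDef) (hL : L.PosSemidef)
    (β : ℝ) (hβ : 0 < β) :
    ∀ (μ : ℝ) (x : Fin n → ℝ), x ≠ 0 →
      ((1 / β) • M + L * M⁻¹ * L) *ᵥ x =
        μ • (((L + (1 / Real.sqrt β) • M) * M⁻¹ * (L + (1 / Real.sqrt β) • M)) *ᵥ x) →
      (∃ a b : ℝ, 0 ≤ a ∧ 0 ≤ b ∧ (a ≠ 0 ∨ b ≠ 0) ∧ μ = (a ^ 2 + b ^ 2) / (a + b) ^ 2) ∧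
        1 / 2 ≤ μ ∧ μ ≤ 1 := by
  intro μ x hx h
  have hc : (1 / Real.sqrt β) ^ 2 = 1 / β := by rw [div_pow, Real.sq_sqrt hβ.le, one_pow]
  rw [← hc] at h
  have hμ := generalizedEigenvalue_mem_Icc hM hL (by positivity) hx h
  exact ⟨exists_eq_sq_add_sq_div_sq_add hμ, hμ⟩
end
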